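/- Let λ : ℕ → ℝ be a nonnegative summable sequence, let a : ℕ → ℝ with ∑_k a_k² < ∞, and let μ̃ = ⨂_{k∈ℕ} N(a_k, λ_k) be the infinite product Gaussian measure on ℕ → ℝ. Then for every h ∈ ℓ²(ℕ), the series ∑_k h_k x_k converges for μ̃-almost every x, and ∫ exp(i ∑_k h_k x_k) dμ̃(x) = exp(i ∑_k a_k h_k) · exp(−(1/2) ∑_k λ_k h_k²). -/

import Mathlib

/-!
By uniqueness of projective limits, `μ` is the product measure `Measure.infinitePi` of the
Gaussians. Its coordinates have second moments `a k ^ 2 + λ k`, a summable sequence, so almost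
every sample is square-summable and pairs with `h` by Cauchy–Schwarz. On partial sums the integral
factorises into Gaussian characteristic functions, and dominated convergence (the integrands have
modulus one) passes to the limit.
-/

open MeasureTheory ProbabilityTheory Complex Filter Topology

open scoped NNReal ENNReal

lemma summable_mul_of_summable_sq {ι : Type*} {f g : ι → ℝ} (hf : Summable fun k => f k ^ 2)
    (hg : Summable fun k => g k ^ 2) : Summable fun k => f k * g k := by
  refine .of_norm_bounded ((hf.add hg).mul_left 2⁻¹) fun k => ?_
  rw [Real.norm_eq_abs, abs_mul]
  nlinarith [sq_nonneg (|f k| - |g k|), sq_abs (f k), sq_abs (g k)]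

lemma ae_summable_of_summable_integral {α ι : Type*} [MeasurableSpace α] [Countable ι]
    {μ : Measure α} {f : ι → α → ℝ} (hf_nonneg : ∀ k x, 0 ≤ f k x)
    (hf_int : ∀ k, Integrable (f k) μ) (hf_sum : Summable fun k => ∫ x, f k x ∂μ) :
    ∀ᵐ x ∂μ, Summable fun k => f k x := by
  have hnorm : ∀ k, eLpNorm (f k) 1 μ = ENNReal.ofReal (∫ x, f k x ∂μ) := fun k => by
    rw [eLpNorm_one_eq_lintegral_enorm, ← ofReal_integral_norm_eq_lintegral_enorm (hf_int k)]
    simp_rw [Real.norm_of_nonneg (hf_nonneg k _)]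
  have hfin : ∑' k, eLpNorm (f k) 1 μ ≠ ∞ := by
    simp_rw [hnorm,
      ← ENNReal.ofReal_tsum_of_nonneg (fun k => integral_nonneg (hf_nonneg k)) hf_sum]
    exact ENNReal.ofReal_ne_top
  filter_upwards [summable_norm_of_tsum_eLpNorm_ne_top le_rfl
    (fun k => (hf_int k).aestronglyMeasurable) hfin] with x hx
  exact hx.of_norm

lemma tendsto_integral_cexp_I_mul {α : Type*} [MeasurableSpace α] {μ : Measure α}
    [IsFiniteMeasure μ] {g : ℕ → α → ℝ} {G : α → ℝ} (hg : ∀ n, Measurable (g n))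
    (hG : ∀ᵐ x ∂μ, Tendsto (fun n => g n x) atTop (𝓝 (G x))) :
    Tendsto (fun n => ∫ x, exp (I * g n x) ∂μ) atTop (𝓝 (∫ x, exp (I * G x) ∂μ)) := by
  refine tendsto_integral_of_dominated_convergence (fun _ => 1) (fun n => ?_)
    (integrable_const 1) (fun n => ae_of_all _ fun x => ?_) ?_
  · fun_prop
  · rw [mul_comm, norm_exp_ofReal_mul_I]
  · filter_upwards [hG] with x hx
    exact ((continuous_exp.comp (continuous_const.mul continuous_ofReal)).tendsto _).comp hx

lemma integrable_sq_gaussianReal (m : ℝ) (v : ℝ≥0) :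
    Integrable (fun x => x ^ 2) (gaussianReal m v) :=
  (memLp_id_gaussianReal 2).integrable_sq

lemma integral_sq_gaussianReal (m : ℝ) (v : ℝ≥0) :
    ∫ x, x ^ 2 ∂gaussianReal m v = m ^ 2 + v := by
  have := variance_eq_sub (memLp_id_gaussianReal (μ := m) (v := v) 2)
  simp only [Pi.pow_apply, id_eq, variance_id_gaussianReal, integral_id_gaussianReal] at this
  linarith

lemma integral_finset_prod_infinitePi {ι : Type*} {X : ι → Type*} [∀ i, MeasurableSpace (X i)]
    (μ : ∀ i, Measure (X i)) [∀ i, IsProbabilityMeasure (μ i)] {𝕜 : Type*} [RCLike 𝕜]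
    (s : Finset ι) {f : ∀ i, X i → 𝕜} (hf : ∀ i, Measurable (f i)) :
    ∫ x, ∏ i ∈ s, f i (x i) ∂Measure.infinitePi μ = ∏ i ∈ s, ∫ y, f i y ∂μ i := by
  have hrestrict : (fun x : ∀ i, X i => ∏ i ∈ s, f i (x i))
      = fun x => ∏ i : s, f i (s.restrict x i) := by
    ext x
    exact (Finset.prod_coe_sort s fun i => f i (x i)).symm
  rw [hrestrict, integral_restrict_infinitePi μ (f := fun y : ∀ i : s, X i => ∏ j : s, f j (y j)),
    integral_fintype_prod_eq_prod, Finset.prod_coe_sort s fun i => ∫ y, f i y ∂μ i]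
  exact Measurable.aestronglyMeasurable (by fun_prop)

lemma ae_summable_sq_infinitePi {ι : Type*} [Countable ι] {ν : ι → Measure ℝ}
    [∀ i, IsProbabilityMeasure (ν i)] (hint : ∀ i, Integrable (fun y => y ^ 2) (ν i))
    (hsum : Summable fun i => ∫ y, y ^ 2 ∂ν i) :
    ∀ᵐ x ∂Measure.infinitePi ν, Summable fun i => x i ^ 2 := by
  refine ae_summable_of_summable_integral (fun i x => sq_nonneg (x i)) (fun i => ?_) ?_
  · exact (measurePreserving_eval_infinitePi ν i).integrable_comp_of_integrable (hint i)
  · refine hsum.congr fun i => ?_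
    rw [← Measure.infinitePi_map_eval ν i,
      integral_map (measurable_pi_apply i).aemeasurable (by fun_prop)]

lemma integral_cexp_sum_infinitePi_gaussianReal {ι : Type*} (m : ι → ℝ) (v : ι → ℝ≥0)
    (s : Finset ι) (t : ι → ℝ) :
    ∫ x, exp (I * ↑(∑ k ∈ s, t k * x k))
        ∂Measure.infinitePi (fun k => gaussianReal (m k) (v k))
      = exp (∑ k ∈ s, (I * ↑(m k * t k) - 1 / 2 * ↑((v k : ℝ) * t k ^ 2))) := by
  simp_rw [ofReal_sum, Finset.mul_sum, exp_sum]
  rw [integral_finset_prod_infinitePi _ _ (f := fun k y => exp (I * ↑(t k * y)))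
    fun k => by fun_prop]
  refine Finset.prod_congr rfl fun k _ => ?_
  have hcf := charFun_gaussianReal (μ := m k) (v := v k) (t k)
  rw [charFun_apply_real] at hcf
  convert hcf using 1
  · exact integral_congr_ae (ae_of_all _ fun y => by push_cast; ring_nf)
  · push_cast
    ring_nf

theorem infinite_product_gaussian_characteristic_functional_general
    (lam a : ℕ → ℝ) (hlam_nonneg : ∀ k, 0 ≤ lam k) (hlam_summable : Summable lam)
    (ha : Summable fun k => a k ^ 2)
    (μ : Measure (ℕ → ℝ))
    (hμ : IsProjectiveLimit μ
      (fun I : Finset ℕ =>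
        Measure.pi fun i : I => gaussianReal (a i) (Real.toNNReal (lam i))))
    (h : ℕ → ℝ) (hh : Summable fun k => h k ^ 2) :
    (∀ᵐ x ∂μ, Summable fun k => h k * x k) ∧
      ∫ x, Complex.exp (Complex.I * ((∑' k, h k * x k : ℝ) : ℂ)) ∂μ =
        Complex.exp (Complex.I * ((∑' k, a k * h k : ℝ) : ℂ)) *
          Complex.exp (-(1 / 2 : ℂ) * ((∑' k, lam k * h k ^ 2 : ℝ) : ℂ)) := by
  have hlam : ∀ k, ((lam k).toNNReal : ℝ) = lam k := fun k => Real.coe_toNNReal _ (hlam_nonneg k)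
  set ν : ℕ → Measure ℝ := fun k => gaussianReal (a k) (lam k).toNNReal
  obtain rfl : μ = Measure.infinitePi ν := hμ.unique (Measure.isProjectiveLimit_infinitePi ν)
  have hsummable : ∀ᵐ x ∂Measure.infinitePi ν, Summable fun k => h k * x k := by
    filter_upwards [ae_summable_sq_infinitePi (fun k => integrable_sq_gaussianReal _ _)
      (by simpa only [ν, integral_sq_gaussianReal, hlam] using ha.add hlam_summable)] with x hx
    exact summable_mul_of_summable_sq hh hx
  have hlam_sq : Summable fun k => lam k * h k ^ 2 :=
    (hlam_summable.mul_right (∑' k, h k ^ 2)).of_nonneg_of_le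
      (fun k => mul_nonneg (hlam_nonneg k) (sq_nonneg _))
      fun k => mul_le_mul_of_nonneg_left (hh.le_tsum k fun j _ => sq_nonneg _) (hlam_nonneg k)
  have hexponent : HasSum (fun k => I * ↑(a k * h k) - 1 / 2 * ↑(lam k * h k ^ 2))
      (I * ↑(∑' k, a k * h k) - 1 / 2 * ↑(∑' k, lam k * h k ^ 2)) :=
    ((hasSum_ofReal.mpr (summable_mul_of_summable_sq ha hh).hasSum).mul_left I).sub
      ((hasSum_ofReal.mpr hlam_sq.hasSum).mul_left (1 / 2))
  refine ⟨hsummable, tendsto_nhds_unique (tendsto_integral_cexp_I_mul (fun n => by fun_prop)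
    (hsummable.mono fun x hx => hx.hasSum.tendsto_sum_nat)) ?_⟩
  simp_rw [ν, integral_cexp_sum_infinitePi_gaussianReal, hlam]
  rw [← exp_add, neg_mul, ← sub_eq_add_neg]
  exact (continuous_exp.tendsto _).comp hexponent.tendsto_sum_nat

/-- Characteristic functional of the infinite-product Gaussian measure
`μ̃ = ⨂_{k∈ℕ} N(a k, λ k)` on `ℕ → ℝ`: for every square-summable sequence `h`, the series
`∑ k, h k * x k` converges `μ̃`-a.e., and
`∫ exp(i ∑ k, h k * x k) dμ̃(x) = exp(i ∑ k, a k * h k) * exp(-(1/2) ∑ k, λ k * (h k)^2)`. -/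
theorem infinite_product_gaussian_characteristic_functional
    (lam a : ℕ → ℝ) (hlam_nonneg : ∀ k, 0 ≤ lam k) (hlam_summable : Summable lam)
    (ha : Summable fun k => a k ^ 2)
    (μ : Measure (ℕ → ℝ)) [IsProbabilityMeasure μ]
    (hμ : IsProjectiveLimit μ
      (fun I : Finset ℕ =>
        Measure.pi fun i : I => gaussianReal (a i) (Real.toNNReal (lam i))))
    (h : ℕ → ℝ) (hh : Summable fun k => h k ^ 2) :
    (∀ᵐ x ∂μ, Summable fun k => h k * x k) ∧
      ∫ x, Complex.exp (Complex.I * ((∑' k, h k * x k : ℝ) : ℂ)) ∂μ =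
        Complex.exp (Complex.I * ((∑' k, a k * h k : ℝ) : ℂ)) *
          Complex.exp (-(1 / 2 : ℂ) * ((∑' k, lam k * h k ^ 2 : ℝ) : ℂ)) :=
  infinite_product_gaussian_characteristic_functional_general lam a hlam_nonneg hlam_summable ha μ
    hμ h hh
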